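/- Let ε > 0 and let f: Ω^C → 𝒳 be data with d^Ω_∞(f) < ε/(4 B'_ν(Ω)). Set p = max{α₁,α₂,α₃,α₄,β₁,β₂,γ} and assume d₁^Ω(f) ≤ ε² / (8² · 20 · p · C_ν(Ω) · B'_ν(Ω)²). Here B'_ν(Ω) ≥ 1 is a constant such that for any data g: Ω^C → 𝒳 every minimizer u* of the noiseless inpainting functional with data g satisfies d_{𝒳,m}(u*_{i,j}, g_{ν(i,j)}) ≤ B'_ν(Ω) d^Ω_∞(g) for all pixels, and C_ν(Ω) is a constant such that d₁(E_ν g) ≤ C_ν(Ω) d₁^Ω(g) for all g. Then every minimizer x* of the inpainting functional J_Ω (either the noiseless constrained model or the noisy model) satisfies e_∞(x*, f) ≤ ε. -/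

import Mathlib

open scoped Classical

noncomputable section

/-- `(t)_{2π}`: the unique element of `[-π, π)` with `t - (t)_{2π} ∈ 2πℤ`. -/
def wrap (t : ℝ) : ℝ := t - 2 * Real.pi * (⌊(t + Real.pi) / (2 * Real.pi)⌋ : ℤ)

/-- A point of `𝒳 = (𝕊¹)^m × ℝⁿ`, identified with `[-π,π)^m × ℝⁿ`; points of the universal
covering `𝒴 = ℝ^{m+n}` are represented by the same type without the range restriction. -/
abbrev Pt (m n : ℕ) := (Fin m → ℝ) × (Fin n → ℝ)

/-- The pixel grid `Ω₀ = {1,…,N} × {1,…,M}`. -/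
abbrev Grid (N M : ℕ) := Fin N × Fin M

/-- Distance on the cyclic components of `𝒳`. -/
def dXm {m n : ℕ} (x y : Pt m n) : ℝ :=
  Real.sqrt (∑ i, (wrap (x.1 i - y.1 i)) ^ 2)

/-- Distance on `𝒳`. -/
def dX {m n : ℕ} (x y : Pt m n) : ℝ :=
  Real.sqrt ((∑ i, (wrap (x.1 i - y.1 i)) ^ 2) + ∑ i, (x.2 i - y.2 i) ^ 2)

/-- Combined absolute finite difference of `x ∈ 𝒳^d` with respect to the weight `w`. -/
def Dw {m n : ℕ} (d : ℕ) (w : Fin d → ℝ) (x : Fin d → Pt m n) : ℝ :=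
  Real.sqrt
    ((sInf {r : ℝ | ∃ k : Fin m → Fin d → ℤ,
        r = ∑ i, (∑ j, ((x j).1 i + 2 * Real.pi * (k i j : ℝ)) * w j) ^ 2}) +
      ∑ i, (∑ j, (x j).2 i * w j) ^ 2)

/-- First order combined absolute difference `D₁`. -/
def D1 {m n : ℕ} (a b : Pt m n) : ℝ := Dw 2 ![(-1 : ℝ), 1] ![a, b]

/-- Second order combined absolute difference `D₂`. -/
def D2 {m n : ℕ} (a b c : Pt m n) : ℝ := Dw 3 ![(1 : ℝ), -2, 1] ![a, b, c]

/-- Mixed second order combined absolute difference `D₁,₁`. -/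
def D11 {m n : ℕ} (a b c d : Pt m n) : ℝ := Dw 4 ![(-1 : ℝ), 1, 1, -1] ![a, b, c, d]

/-- First order TV term with horizontal, vertical and two diagonal directions. -/
def TV1 {m n : ℕ} (N M : ℕ) (a1 a2 a3 a4 : ℝ) (x : Grid N M → Pt m n) : ℝ :=
  a1 * (∑ p : Grid N M,
      if h : (p.1 : ℕ) + 1 < N then D1 (x p) (x (⟨(p.1 : ℕ) + 1, h⟩, p.2)) else 0)
  + a2 * (∑ p : Grid N M,
      if h : (p.2 : ℕ) + 1 < M then D1 (x p) (x (p.1, ⟨(p.2 : ℕ) + 1, h⟩)) else 0)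
  + (a3 / Real.sqrt 2) * (∑ p : Grid N M,
      if h : (p.1 : ℕ) + 1 < N ∧ (p.2 : ℕ) + 1 < M then
        D1 (x p) (x (⟨(p.1 : ℕ) + 1, h.1⟩, ⟨(p.2 : ℕ) + 1, h.2⟩)) else 0)
  + (a4 / Real.sqrt 2) * (∑ p : Grid N M,
      if h : (p.1 : ℕ) + 1 < N ∧ (p.2 : ℕ) + 1 < M then
        D1 (x (p.1, ⟨(p.2 : ℕ) + 1, h.2⟩)) (x (⟨(p.1 : ℕ) + 1, h.1⟩, p.2)) else 0)

/-- Second order TV term (horizontal and vertical). -/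
def TV2 {m n : ℕ} (N M : ℕ) (b1 b2 : ℝ) (x : Grid N M → Pt m n) : ℝ :=
  b1 * (∑ p : Grid N M,
      if h : (p.1 : ℕ) + 2 < N then
        D2 (x p) (x (⟨(p.1 : ℕ) + 1, by omega⟩, p.2)) (x (⟨(p.1 : ℕ) + 2, h⟩, p.2))
      else 0)
  + b2 * (∑ p : Grid N M,
      if h : (p.2 : ℕ) + 2 < M then
        D2 (x p) (x (p.1, ⟨(p.2 : ℕ) + 1, by omega⟩)) (x (p.1, ⟨(p.2 : ℕ) + 2, h⟩))
      else 0)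

/-- Mixed second order TV term over `2×2` blocks. -/
def TV11 {m n : ℕ} (N M : ℕ) (g : ℝ) (x : Grid N M → Pt m n) : ℝ :=
  g * (∑ p : Grid N M,
      if h : (p.1 : ℕ) + 1 < N ∧ (p.2 : ℕ) + 1 < M then
        D11 (x p) (x (⟨(p.1 : ℕ) + 1, h.1⟩, p.2)) (x (p.1, ⟨(p.2 : ℕ) + 1, h.2⟩))
          (x (⟨(p.1 : ℕ) + 1, h.1⟩, ⟨(p.2 : ℕ) + 1, h.2⟩))
      else 0)

/-- The full regularizer `αTV₁ + βTV₂ + γTV₁,₁`. -/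
def TVall {m n : ℕ} (N M : ℕ) (a1 a2 a3 a4 b1 b2 g : ℝ) (x : Grid N M → Pt m n) : ℝ :=
  TV1 N M a1 a2 a3 a4 x + TV2 N M b1 b2 x + TV11 N M g x

/-- An image is `𝒳`-valued when all cyclic components lie in `[-π, π)`. -/
def inXimg {m n N M : ℕ} (x : Grid N M → Pt m n) : Prop :=
  ∀ p, ∀ i, (x p).1 i ∈ Set.Ico (-Real.pi) Real.pi

/-- The noisy inpainting functional `J_Ω`. -/
def Jnoisy {m n : ℕ} (N M : ℕ) (Om : Finset (Grid N M)) (f : Grid N M → Pt m n)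
    (a1 a2 a3 a4 b1 b2 g : ℝ) (x : Grid N M → Pt m n) : ℝ :=
  (1 / 2) * (∑ p ∈ Omᶜ, dX (x p) (f p) ^ 2) + TVall N M a1 a2 a3 a4 b1 b2 g x

/-- `x` is a minimizer of the noisy inpainting functional over `𝒳`-valued images. -/
def MinNoisy {m n : ℕ} (N M : ℕ) (Om : Finset (Grid N M)) (f : Grid N M → Pt m n)
    (a1 a2 a3 a4 b1 b2 g : ℝ) (x : Grid N M → Pt m n) : Prop :=
  inXimg x ∧ ∀ y, inXimg y →
    Jnoisy N M Om f a1 a2 a3 a4 b1 b2 g x ≤ Jnoisy N M Om f a1 a2 a3 a4 b1 b2 g y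

/-- `x` is a minimizer of the noiseless (constrained) inpainting functional over
`𝒳`-valued images agreeing with the data `f` on `Ω^C`. -/
def MinNoiseless {m n : ℕ} (N M : ℕ) (Om : Finset (Grid N M)) (f : Grid N M → Pt m n)
    (a1 a2 a3 a4 b1 b2 g : ℝ) (x : Grid N M → Pt m n) : Prop :=
  inXimg x ∧ (∀ p ∈ Omᶜ, x p = f p) ∧
    ∀ y, inXimg y → (∀ p ∈ Omᶜ, y p = f p) →
      TVall N M a1 a2 a3 a4 b1 b2 g x ≤ TVall N M a1 a2 a3 a4 b1 b2 g y

/-- Eight-neighborhood relation on the pixel grid. -/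
def eight {N M : ℕ} (p q : Grid N M) : Prop :=
  p ≠ q ∧ |((p.1 : ℕ) : ℤ) - ((q.1 : ℕ) : ℤ)| ≤ 1 ∧ |((p.2 : ℕ) : ℤ) - ((q.2 : ℕ) : ℤ)| ≤ 1

/-- `d^Ω_∞(f)`: maximal cyclic distance between covering-neighbors in `Ω^C`. -/
def dOmSup {m n N M : ℕ} (Om : Finset (Grid N M)) (Nbh : Grid N M → Finset (Grid N M))
    (f : Grid N M → Pt m n) : ℝ :=
  ⨆ pq : Grid N M × Grid N M,
    if pq.1 ∈ Omᶜ ∧ pq.2 ∈ Omᶜ ∧ pq.2 ∈ Nbh pq.1 then dXm (f pq.1) (f pq.2) else 0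

/-- `d_∞(g)`: maximal cyclic distance between eight-neighbors, over all pixels. -/
def d8Sup {m n N M : ℕ} (g : Grid N M → Pt m n) : ℝ :=
  ⨆ pq : Grid N M × Grid N M, if eight pq.1 pq.2 then dXm (g pq.1) (g pq.2) else 0

/-- `d₁^Ω(f)`: sum over `Ω^C` of the maximal cyclic distance to eight-neighbors in `Ω^C`. -/
def d1Om {m n N M : ℕ} (Om : Finset (Grid N M)) (f : Grid N M → Pt m n) : ℝ :=
  ∑ p ∈ Omᶜ, ⨆ q : Grid N M, if q ∈ Omᶜ ∧ eight p q then dXm (f p) (f q) else 0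

/-- `d₁(g)`: sum over all pixels of the maximal cyclic distance to eight-neighbors. -/
def d1full {m n N M : ℕ} (g : Grid N M → Pt m n) : ℝ :=
  ∑ p : Grid N M, ⨆ q : Grid N M, if eight p q then dXm (g p) (g q) else 0

/-- `e_∞(x, f)`: maximal cyclic distance of `x` to the nearest-neighbor extension of `f`. -/
def eSup {m n N M : ℕ} (nu : Grid N M → Grid N M) (x f : Grid N M → Pt m n) : ℝ :=
  ⨆ p : Grid N M, dXm (x p) (f (nu p))

/-!
The noiseless case is the defining property of `B'`. For a noisy minimizer `x`, compare it with
the competitor that keeps the real components of `x` and takes the cyclic ones from `E_ν f`: it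
fits the cyclic data exactly, and since a combined difference changes by at most the cyclic
distances along the eight-neighbour edges it involves, its regularizer exceeds that of `x` by at
most `10 p d₁(E_ν f) ≤ 10 p C d₁^Ω(f)`. Hence `x` is `ε/(8B')`-close to `f` on `Ω^C`. Being also a
noiseless minimizer for its own data, `x` satisfies
`d(x, x ∘ ν) ≤ B' d^Ω_∞(x) ≤ B' (d^Ω_∞(f) + ε/(4B')) < ε/2`, and the triangle inequality
concludes.
-/

open Real

section Circle

lemma wrap_mem (t : ℝ) : wrap t ∈ Set.Ico (-π) π := by
  have h2π : 0 < 2 * π := by positivity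
  have hlo := Int.floor_le ((t + π) / (2 * π))
  have hhi := Int.lt_floor_add_one ((t + π) / (2 * π))
  rw [le_div_iff₀ h2π] at hlo
  rw [div_lt_iff₀ h2π] at hhi
  constructor <;> unfold wrap <;> nlinarith

lemma wrap_eq_add_int_mul (t : ℝ) : ∃ k : ℤ, wrap t = t + 2 * π * k :=
  ⟨-⌊(t + π) / (2 * π)⌋, by unfold wrap; push_cast; ring⟩

lemma wrap_zero : wrap 0 = 0 := by
  simp [wrap, Int.floor_eq_zero_iff, div_lt_one, pi_pos, (by positivity : 0 ≤ π / (2 * π))]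

lemma coe_wrap (t : ℝ) : ((wrap t : ℝ) : AddCircle (2 * π)) = t := by
  obtain ⟨k, hk⟩ := wrap_eq_add_int_mul t
  rw [hk, AddCircle.coe_add, add_eq_left, AddCircle.coe_eq_zero_iff]
  exact ⟨k, by rw [zsmul_eq_mul]; ring⟩

lemma abs_wrap (t : ℝ) : |wrap t| = ‖(t : AddCircle (2 * π))‖ := by
  have hπ : |2 * π| / 2 = π := by rw [abs_of_pos two_pi_pos]; ring
  rw [← coe_wrap, eq_comm, AddCircle.norm_coe_eq_abs_iff _ two_pi_pos.ne', hπ, abs_le]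
  exact ⟨(wrap_mem t).1, (wrap_mem t).2.le⟩

def toTorus {m n : ℕ} (x : Pt m n) : PiLp 2 (fun _ : Fin m => AddCircle (2 * π)) :=
  WithLp.toLp 2 fun i => (x.1 i : AddCircle (2 * π))

lemma dXm_eq_dist {m n : ℕ} (x y : Pt m n) : dXm x y = dist (toTorus x) (toTorus y) := by
  simp only [dXm, dist_eq_norm, PiLp.norm_eq_of_L2, toTorus, ← WithLp.toLp_sub, Pi.sub_apply,
    ← AddCircle.coe_sub, ← abs_wrap, sq_abs]

end Circle

section PointDistances

variable {m n : ℕ}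

lemma dXm_comm (x y : Pt m n) : dXm x y = dXm y x := by
  simp only [dXm_eq_dist, dist_comm]

lemma dXm_triangle (x y z : Pt m n) : dXm x z ≤ dXm x y + dXm y z := by
  simp only [dXm_eq_dist, dist_triangle]

lemma dXm_nonneg (x y : Pt m n) : 0 ≤ dXm x y := Real.sqrt_nonneg _

lemma dXm_eq_zero_of_fst_eq {x y : Pt m n} (h : x.1 = y.1) : dXm x y = 0 := by
  rw [dXm_eq_dist, toTorus, toTorus, h, dist_self]

lemma dX_sq (x y : Pt m n) : dX x y ^ 2 = dXm x y ^ 2 + ∑ i, (x.2 i - y.2 i) ^ 2 := by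
  rw [dX, dXm, sq_sqrt (by positivity), sq_sqrt (by positivity)]

end PointDistances

lemma sqrt_sum_sq_add_le {ι : Type*} [Fintype ι] (u v : ι → ℝ) :
    √(∑ i, (u i + v i) ^ 2) ≤ √(∑ i, u i ^ 2) + √(∑ i, v i ^ 2) := by
  simpa [EuclideanSpace.norm_eq, sq_abs] using
    norm_add_le (WithLp.toLp 2 u : EuclideanSpace ℝ ι) (WithLp.toLp 2 v)

lemma sqrt_add_le_add_sqrt {a b : ℝ} (ha : 0 ≤ a) (hb : 0 ≤ b) : √(a + b) ≤ √a + √b := by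
  rw [sqrt_le_left (by positivity), add_sq, sq_sqrt ha, sq_sqrt hb]
  nlinarith [sqrt_nonneg a, sqrt_nonneg b]

section CombinedDifferences

variable {m n d : ℕ}

def cycEnergy (w : Fin d → ℝ) (x : Fin d → Pt m n) : ℝ :=
  sInf {r : ℝ | ∃ k : Fin m → Fin d → ℤ,
    r = ∑ i, (∑ j, ((x j).1 i + 2 * π * (k i j : ℝ)) * w j) ^ 2}

lemma cycEnergy_nonneg (w : Fin d → ℝ) (x : Fin d → Pt m n) : 0 ≤ cycEnergy w x :=
  le_csInf ⟨_, fun _ _ => 0, rfl⟩ (by rintro r ⟨k, rfl⟩; positivity)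

lemma cycEnergy_le (w : Fin d → ℝ) (x : Fin d → Pt m n) (k : Fin m → Fin d → ℤ) :
    cycEnergy w x ≤ ∑ i, (∑ j, ((x j).1 i + 2 * π * (k i j : ℝ)) * w j) ^ 2 :=
  csInf_le ⟨0, by rintro r ⟨k, rfl⟩; positivity⟩ ⟨k, rfl⟩

lemma Dw_le_sqrt_cycEnergy_add (w : Fin d → ℝ) {x x' : Fin d → Pt m n}
    (h : ∀ j, (x' j).2 = (x j).2) : Dw d w x' ≤ √(cycEnergy w x') + Dw d w x := by
  have hreal : ∑ i, (∑ j, (x' j).2 i * w j) ^ 2 = ∑ i, (∑ j, (x j).2 i * w j) ^ 2 := by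
    simp only [h]
  change √(cycEnergy w x' + _) ≤ _ + √(cycEnergy w x + _)
  rw [hreal]
  calc _ ≤ √(cycEnergy w x') + √(∑ i, (∑ j, (x j).2 i * w j) ^ 2) :=
        sqrt_add_le_add_sqrt (cycEnergy_nonneg w x') (by positivity)
    _ ≤ _ := by gcongr; exact le_add_of_nonneg_left (cycEnergy_nonneg w x)

lemma sqrt_cycEnergy_le_dXm_add (w : Fin d → ℝ) (x : Fin d → Pt m n) (a b c e : Pt m n)
    (h : ∀ i, ∃ k : Fin d → ℤ, ∑ j, ((x j).1 i + 2 * π * (k j : ℝ)) * w j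
      = wrap (a.1 i - b.1 i) + wrap (c.1 i - e.1 i)) :
    √(cycEnergy w x) ≤ dXm a b + dXm c e := by
  choose k hk using h
  calc √(cycEnergy w x) ≤ √(∑ i, (wrap (a.1 i - b.1 i) + wrap (c.1 i - e.1 i)) ^ 2) := by
        gcongr
        simpa only [hk] using cycEnergy_le w x k
    _ ≤ dXm a b + dXm c e := sqrt_sum_sq_add_le _ _

lemma D1_le_add_dXm {a b a' b' : Pt m n} (ha : a'.2 = a.2) (hb : b'.2 = b.2) :
    D1 a' b' ≤ D1 a b + dXm a' b' := by
  have hcyc : √(cycEnergy ![(-1 : ℝ), 1] ![a', b']) ≤ dXm b' a' + dXm a' a' :=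
    sqrt_cycEnergy_le_dXm_add _ _ _ _ _ _ fun i => by
      obtain ⟨k, hk⟩ := wrap_eq_add_int_mul (b'.1 i - a'.1 i)
      exact ⟨![0, k], by simp [hk, wrap_zero]; ring⟩
  have := Dw_le_sqrt_cycEnergy_add ![(-1 : ℝ), 1] (x := ![a, b]) (x' := ![a', b'])
    (by simp [Fin.forall_fin_two, ha, hb])
  rw [dXm_comm b', dXm_eq_zero_of_fst_eq rfl, add_zero] at hcyc
  unfold D1
  linarith

lemma D2_le_add_dXm {a b c a' b' c' : Pt m n} (ha : a'.2 = a.2) (hb : b'.2 = b.2)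
    (hc : c'.2 = c.2) : D2 a' b' c' ≤ D2 a b c + dXm a' b' + dXm c' b' := by
  have hcyc : √(cycEnergy ![(1 : ℝ), -2, 1] ![a', b', c']) ≤ dXm a' b' + dXm c' b' :=
    sqrt_cycEnergy_le_dXm_add _ _ _ _ _ _ fun i => by
      obtain ⟨k, hk⟩ := wrap_eq_add_int_mul (a'.1 i - b'.1 i)
      obtain ⟨l, hl⟩ := wrap_eq_add_int_mul (c'.1 i - b'.1 i)
      exact ⟨![k, 0, l], by simp [Fin.sum_univ_three, hk, hl]; ring⟩
  have := Dw_le_sqrt_cycEnergy_add ![(1 : ℝ), -2, 1] (x := ![a, b, c]) (x' := ![a', b', c'])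
    (by simp [Fin.forall_fin_succ, ha, hb, hc])
  unfold D2
  linarith

lemma D11_le_add_dXm {a b c e a' b' c' e' : Pt m n} (ha : a'.2 = a.2) (hb : b'.2 = b.2)
    (hc : c'.2 = c.2) (he : e'.2 = e.2) :
    D11 a' b' c' e' ≤ D11 a b c e + dXm a' b' + dXm c' e' := by
  have hcyc : √(cycEnergy ![(-1 : ℝ), 1, 1, -1] ![a', b', c', e']) ≤ dXm b' a' + dXm c' e' :=
    sqrt_cycEnergy_le_dXm_add _ _ _ _ _ _ fun i => by
      obtain ⟨k, hk⟩ := wrap_eq_add_int_mul (b'.1 i - a'.1 i)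
      obtain ⟨l, hl⟩ := wrap_eq_add_int_mul (c'.1 i - e'.1 i)
      exact ⟨![0, k, l, 0], by simp [Fin.sum_univ_four, hk, hl]; ring⟩
  have := Dw_le_sqrt_cycEnergy_add ![(-1 : ℝ), 1, 1, -1] (x := ![a, b, c, e])
    (x' := ![a', b', c', e']) (by simp [Fin.forall_fin_succ, ha, hb, hc, he])
  rw [dXm_comm b'] at hcyc
  unfold D11
  linarith

end CombinedDifferences

lemma sum_dite_comp_le_sum {α : Type*} [Fintype α] {P : α → Prop} [DecidablePred P]
    {s : α → ℝ} (hs : ∀ q, 0 ≤ s q) (σ : ∀ p, P p → α)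
    (hσ : ∀ p hp q hq, σ p hp = σ q hq → p = q) :
    ∑ p, (if hp : P p then s (σ p hp) else 0) ≤ ∑ q, s q := by
  rw [Finset.sum_dite, Finset.sum_const_zero, add_zero,
    ← Finset.sum_image (g := fun p => σ p.1 (Finset.mem_filter.1 p.2).2)
      fun p _ q _ h => Subtype.ext (hσ _ _ _ _ h)]
  exact Finset.sum_le_sum_of_subset_of_nonneg (Finset.subset_univ _) fun q _ _ => hs q

section GridSums

variable {m n N M : ℕ}

lemma eight_iff {p q : Grid N M} : eight p q ↔ p ≠ q ∧
    (p.1 : ℕ) ≤ q.1 + 1 ∧ (q.1 : ℕ) ≤ p.1 + 1 ∧ (p.2 : ℕ) ≤ q.2 + 1 ∧ (q.2 : ℕ) ≤ p.2 + 1 := by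
  simp only [eight, abs_le]
  exact and_congr_right fun _ => by omega

def localOsc (F : Grid N M → Pt m n) (p : Grid N M) : ℝ :=
  ⨆ q : Grid N M, if eight p q then dXm (F p) (F q) else 0

lemma d1full_eq_sum_localOsc (F : Grid N M → Pt m n) : d1full F = ∑ p, localOsc F p := rfl

lemma localOsc_nonneg (F : Grid N M → Pt m n) (p : Grid N M) : 0 ≤ localOsc F p :=
  Real.iSup_nonneg fun q => by split_ifs <;> simp [dXm_nonneg]

lemma dXm_le_localOsc (F : Grid N M → Pt m n) {p q : Grid N M} (h : eight p q) :
    dXm (F p) (F q) ≤ localOsc F p := by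
  have := le_ciSup (Set.finite_range fun r => if eight p r then dXm (F p) (F r) else 0).bddAbove q
  rwa [if_pos h] at this

-- Injectivity of `u` makes every pixel pay its local oscillation at most once.
lemma sum_dite_le_add_d1full (F : Grid N M → Pt m n) {P : Grid N M → Prop} [DecidablePred P]
    {T T' : ∀ p, P p → ℝ} (u v : ∀ p, P p → Grid N M)
    (hu : ∀ p hp q hq, u p hp = u q hq → p = q) (huv : ∀ p hp, eight (u p hp) (v p hp))
    (hle : ∀ p hp, T' p hp ≤ T p hp + dXm (F (u p hp)) (F (v p hp))) :
    ∑ p, (if hp : P p then T' p hp else 0) ≤ ∑ p, (if hp : P p then T p hp else 0) + d1full F := by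
  calc ∑ p, (if hp : P p then T' p hp else 0)
      ≤ ∑ p, ((if hp : P p then T p hp else 0) + if hp : P p then localOsc F (u p hp) else 0) := by
        refine Finset.sum_le_sum fun p _ => ?_
        split_ifs with hp
        · exact (hle p hp).trans (by gcongr; exact dXm_le_localOsc F (huv p hp))
        · simp
    _ ≤ _ := by
        rw [Finset.sum_add_distrib, d1full_eq_sum_localOsc]
        exact add_le_add_right (sum_dite_comp_le_sum (localOsc_nonneg F) u hu) _

end GridSums

def replaceCyclic {ι : Type*} {m n : ℕ} (x F : ι → Pt m n) : ι → Pt m n :=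
  fun p => ((F p).1, (x p).2)

section ReplaceCyclic

variable {m n N M : ℕ} (x F : Grid N M → Pt m n) {P : Grid N M → Prop} [DecidablePred P]

lemma sum_D1_replaceCyclic_le (u v : ∀ p, P p → Grid N M)
    (hu : ∀ p hp q hq, u p hp = u q hq → p = q) (huv : ∀ p hp, eight (u p hp) (v p hp)) :
    ∑ p, (if hp : P p then
        D1 (replaceCyclic x F (u p hp)) (replaceCyclic x F (v p hp)) else 0)
      ≤ ∑ p, (if hp : P p then D1 (x (u p hp)) (x (v p hp)) else 0) + d1full F :=
  sum_dite_le_add_d1full F u v hu huv fun _ _ => D1_le_add_dXm rfl rfl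

lemma sum_D2_replaceCyclic_le (u v w : ∀ p, P p → Grid N M)
    (hu : ∀ p hp q hq, u p hp = u q hq → p = q) (hw : ∀ p hp q hq, w p hp = w q hq → p = q)
    (huv : ∀ p hp, eight (u p hp) (v p hp)) (hwv : ∀ p hp, eight (w p hp) (v p hp)) :
    ∑ p, (if hp : P p then D2 (replaceCyclic x F (u p hp)) (replaceCyclic x F (v p hp))
        (replaceCyclic x F (w p hp)) else 0)
      ≤ ∑ p, (if hp : P p then D2 (x (u p hp)) (x (v p hp)) (x (w p hp)) else 0)
        + 2 * d1full F := by
  calc _ ≤ ∑ p, (if hp : P p then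
          D2 (x (u p hp)) (x (v p hp)) (x (w p hp)) + dXm (F (u p hp)) (F (v p hp)) else 0)
        + d1full F := by
          apply sum_dite_le_add_d1full F w v hw hwv
          exact fun _ _ => D2_le_add_dXm rfl rfl rfl
    _ ≤ ∑ p, (if hp : P p then D2 (x (u p hp)) (x (v p hp)) (x (w p hp)) else 0)
        + d1full F + d1full F := by
        gcongr
        exact sum_dite_le_add_d1full F u v hu huv fun _ _ => le_rfl
    _ = _ := by ring

lemma sum_D11_replaceCyclic_le (u v w z : ∀ p, P p → Grid N M)
    (hu : ∀ p hp q hq, u p hp = u q hq → p = q) (hw : ∀ p hp q hq, w p hp = w q hq → p = q)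
    (huv : ∀ p hp, eight (u p hp) (v p hp)) (hwz : ∀ p hp, eight (w p hp) (z p hp)) :
    ∑ p, (if hp : P p then D11 (replaceCyclic x F (u p hp)) (replaceCyclic x F (v p hp))
        (replaceCyclic x F (w p hp)) (replaceCyclic x F (z p hp)) else 0)
      ≤ ∑ p, (if hp : P p then D11 (x (u p hp)) (x (v p hp)) (x (w p hp)) (x (z p hp)) else 0)
        + 2 * d1full F := by
  calc _ ≤ ∑ p, (if hp : P p then D11 (x (u p hp)) (x (v p hp)) (x (w p hp)) (x (z p hp))
          + dXm (F (u p hp)) (F (v p hp)) else 0) + d1full F := by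
          apply sum_dite_le_add_d1full F w z hw hwz
          exact fun _ _ => D11_le_add_dXm rfl rfl rfl rfl
    _ ≤ ∑ p, (if hp : P p then D11 (x (u p hp)) (x (v p hp)) (x (w p hp)) (x (z p hp)) else 0)
        + d1full F + d1full F := by
        gcongr
        exact sum_dite_le_add_d1full F u v hu huv fun _ _ => le_rfl
    _ = _ := by ring

end ReplaceCyclic

section TotalVariation

variable {m n N M : ℕ} (x F : Grid N M → Pt m n)

lemma TV1_replaceCyclic_le {a1 a2 a3 a4 : ℝ} (ha1 : 0 ≤ a1) (ha2 : 0 ≤ a2) (ha3 : 0 ≤ a3)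
    (ha4 : 0 ≤ a4) :
    TV1 N M a1 a2 a3 a4 (replaceCyclic x F)
      ≤ TV1 N M a1 a2 a3 a4 x + (a1 + a2 + a3 / √2 + a4 / √2) * d1full F := by
  have hor := sum_D1_replaceCyclic_le x F (P := fun p : Grid N M => (p.1 : ℕ) + 1 < N)
    (fun p _ => p) (fun p hp => (⟨p.1 + 1, hp⟩, p.2)) (fun _ _ _ _ h => h)
    (fun p _ => by simp [eight_iff, Prod.ext_iff, Fin.ext_iff]; omega)
  have ver := sum_D1_replaceCyclic_le x F (P := fun p : Grid N M => (p.2 : ℕ) + 1 < M)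
    (fun p _ => p) (fun p hp => (p.1, ⟨p.2 + 1, hp⟩)) (fun _ _ _ _ h => h)
    (fun p _ => by simp [eight_iff, Prod.ext_iff, Fin.ext_iff]; omega)
  have diag := sum_D1_replaceCyclic_le x F
    (P := fun p : Grid N M => (p.1 : ℕ) + 1 < N ∧ (p.2 : ℕ) + 1 < M)
    (fun p _ => p) (fun p hp => (⟨p.1 + 1, hp.1⟩, ⟨p.2 + 1, hp.2⟩)) (fun _ _ _ _ h => h)
    (fun p _ => by simp [eight_iff, Prod.ext_iff, Fin.ext_iff]; omega)
  have anti := sum_D1_replaceCyclic_le x F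
    (P := fun p : Grid N M => (p.1 : ℕ) + 1 < N ∧ (p.2 : ℕ) + 1 < M)
    (fun p hp => (p.1, ⟨p.2 + 1, hp.2⟩)) (fun p hp => (⟨p.1 + 1, hp.1⟩, p.2))
    (fun _ _ _ _ h => by simpa [Prod.ext_iff, Fin.ext_iff] using h)
    (fun p _ => by simp [eight_iff, Prod.ext_iff, Fin.ext_iff]; omega)
  unfold TV1
  have := mul_le_mul_of_nonneg_left hor ha1
  have := mul_le_mul_of_nonneg_left ver ha2
  have := mul_le_mul_of_nonneg_left diag (by positivity : 0 ≤ a3 / √2)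
  have := mul_le_mul_of_nonneg_left anti (by positivity : 0 ≤ a4 / √2)
  linarith

lemma TV2_replaceCyclic_le {b1 b2 : ℝ} (hb1 : 0 ≤ b1) (hb2 : 0 ≤ b2) :
    TV2 N M b1 b2 (replaceCyclic x F) ≤ TV2 N M b1 b2 x + 2 * (b1 + b2) * d1full F := by
  have hor := sum_D2_replaceCyclic_le x F (P := fun p : Grid N M => (p.1 : ℕ) + 2 < N)
    (fun p _ => p) (fun p hp => (⟨p.1 + 1, by omega⟩, p.2)) (fun p hp => (⟨p.1 + 2, hp⟩, p.2))
    (fun _ _ _ _ h => h) (fun _ _ _ _ h => by simpa [Prod.ext_iff, Fin.ext_iff] using h)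
    (fun p _ => by simp [eight_iff, Prod.ext_iff, Fin.ext_iff]; omega)
    (fun p _ => by simp [eight_iff, Prod.ext_iff, Fin.ext_iff])
  have ver := sum_D2_replaceCyclic_le x F (P := fun p : Grid N M => (p.2 : ℕ) + 2 < M)
    (fun p _ => p) (fun p hp => (p.1, ⟨p.2 + 1, by omega⟩)) (fun p hp => (p.1, ⟨p.2 + 2, hp⟩))
    (fun _ _ _ _ h => h) (fun _ _ _ _ h => by simpa [Prod.ext_iff, Fin.ext_iff] using h)
    (fun p _ => by simp [eight_iff, Prod.ext_iff, Fin.ext_iff]; omega)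
    (fun p _ => by simp [eight_iff, Prod.ext_iff, Fin.ext_iff])
  unfold TV2
  have := mul_le_mul_of_nonneg_left hor hb1
  have := mul_le_mul_of_nonneg_left ver hb2
  linarith

lemma TV11_replaceCyclic_le {g : ℝ} (hg : 0 ≤ g) :
    TV11 N M g (replaceCyclic x F) ≤ TV11 N M g x + 2 * g * d1full F := by
  have block := sum_D11_replaceCyclic_le x F
    (P := fun p : Grid N M => (p.1 : ℕ) + 1 < N ∧ (p.2 : ℕ) + 1 < M)
    (fun p _ => p) (fun p hp => (⟨p.1 + 1, hp.1⟩, p.2)) (fun p hp => (p.1, ⟨p.2 + 1, hp.2⟩))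
    (fun p hp => (⟨p.1 + 1, hp.1⟩, ⟨p.2 + 1, hp.2⟩))
    (fun _ _ _ _ h => h) (fun _ _ _ _ h => by simpa [Prod.ext_iff, Fin.ext_iff] using h)
    (fun p _ => by simp [eight_iff, Prod.ext_iff, Fin.ext_iff]; omega)
    (fun p _ => by simp [eight_iff, Prod.ext_iff, Fin.ext_iff]; omega)
  unfold TV11
  have := mul_le_mul_of_nonneg_left block hg
  linarith

lemma TVall_replaceCyclic_le {a1 a2 a3 a4 b1 b2 g : ℝ} (ha1 : 0 ≤ a1) (ha2 : 0 ≤ a2)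
    (ha3 : 0 ≤ a3) (ha4 : 0 ≤ a4) (hb1 : 0 ≤ b1) (hb2 : 0 ≤ b2) (hg : 0 ≤ g) :
    TVall N M a1 a2 a3 a4 b1 b2 g (replaceCyclic x F) ≤ TVall N M a1 a2 a3 a4 b1 b2 g x
      + 10 * max a1 (max a2 (max a3 (max a4 (max b1 (max b2 g))))) * d1full F := by
  set pmax := max a1 (max a2 (max a3 (max a4 (max b1 (max b2 g)))))
  have hd : 0 ≤ d1full F := Finset.sum_nonneg fun p _ => localOsc_nonneg F p
  have hcoef : a1 + a2 + a3 / √2 + a4 / √2 + 2 * (b1 + b2) + 2 * g ≤ 10 * pmax := by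
    have h3 : a3 / √2 ≤ a3 := div_le_self ha3 (by simp [one_le_sqrt])
    have h4 : a4 / √2 ≤ a4 := div_le_self ha4 (by simp [one_le_sqrt])
    have : a1 ≤ pmax ∧ a2 ≤ pmax ∧ a3 ≤ pmax ∧ a4 ≤ pmax ∧ b1 ≤ pmax ∧ b2 ≤ pmax ∧ g ≤ pmax := by
      simp [pmax]
    linarith
  have := mul_le_mul_of_nonneg_right hcoef hd
  unfold TVall
  linarith [TV1_replaceCyclic_le x F ha1 ha2 ha3 ha4, TV2_replaceCyclic_le x F hb1 hb2,
    TV11_replaceCyclic_le x F hg]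

end TotalVariation

section Minimizers

variable {m n N M : ℕ} {Om : Finset (Grid N M)} {a1 a2 a3 a4 b1 b2 g : ℝ}

lemma MinNoisy.minNoiseless_self {f x : Grid N M → Pt m n}
    (hx : MinNoisy N M Om f a1 a2 a3 a4 b1 b2 g x) :
    MinNoiseless N M Om x a1 a2 a3 a4 b1 b2 g x := by
  refine ⟨hx.1, fun _ _ => rfl, fun y hy hyx => ?_⟩
  have hJ := hx.2 y hy
  have hdata : ∑ p ∈ Omᶜ, dX (y p) (f p) ^ 2 = ∑ p ∈ Omᶜ, dX (x p) (f p) ^ 2 :=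
    Finset.sum_congr rfl fun p hp => by rw [hyx p hp]
  unfold Jnoisy at hJ
  linarith

lemma MinNoisy.sum_sq_dXm_le {f x F : Grid N M → Pt m n}
    (hx : MinNoisy N M Om f a1 a2 a3 a4 b1 b2 g x) (hF : inXimg F)
    (hFf : ∀ q ∈ Omᶜ, (F q).1 = (f q).1) :
    ∑ q ∈ Omᶜ, dXm (x q) (f q) ^ 2 ≤ 2 * (TVall N M a1 a2 a3 a4 b1 b2 g (replaceCyclic x F)
      - TVall N M a1 a2 a3 a4 b1 b2 g x) := by
  have hJ := hx.2 (replaceCyclic x F) hF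
  have hsplit : ∑ q ∈ Omᶜ, dX (x q) (f q) ^ 2
      = ∑ q ∈ Omᶜ, dXm (x q) (f q) ^ 2 + ∑ q ∈ Omᶜ, dX (replaceCyclic x F q) (f q) ^ 2 := by
    rw [← Finset.sum_add_distrib]
    refine Finset.sum_congr rfl fun q hq => ?_
    rw [dX_sq, dX_sq, dXm_eq_zero_of_fst_eq (x := replaceCyclic x F q) (hFf q hq)]
    simp [replaceCyclic]
  unfold Jnoisy at hJ
  linarith

lemma MinNoisy.sum_sq_dXm_le_d1full {f x : Grid N M → Pt m n} {nu : Grid N M → Grid N M}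
    (hx : MinNoisy N M Om f a1 a2 a3 a4 b1 b2 g x) (hnu1 : ∀ p, nu p ∈ Omᶜ)
    (hnu2 : ∀ p ∈ Omᶜ, nu p = p) (hf : ∀ p ∈ Omᶜ, ∀ i, (f p).1 i ∈ Set.Ico (-π) π)
    (ha1 : 0 ≤ a1) (ha2 : 0 ≤ a2) (ha3 : 0 ≤ a3) (ha4 : 0 ≤ a4) (hb1 : 0 ≤ b1) (hb2 : 0 ≤ b2)
    (hg : 0 ≤ g) :
    ∑ q ∈ Omᶜ, dXm (x q) (f q) ^ 2
      ≤ 20 * max a1 (max a2 (max a3 (max a4 (max b1 (max b2 g))))) * d1full fun p => f (nu p) := by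
  have := hx.sum_sq_dXm_le (F := fun p => f (nu p)) (fun p => hf _ (hnu1 p))
    fun q hq => by rw [hnu2 q hq]
  have := TVall_replaceCyclic_le x (fun p => f (nu p)) ha1 ha2 ha3 ha4 hb1 hb2 hg
  linarith

end Minimizers

section Suprema

variable {m n N M : ℕ} (Om : Finset (Grid N M)) (Nbh : Grid N M → Finset (Grid N M))

lemma d1Om_nonneg (f : Grid N M → Pt m n) : 0 ≤ d1Om Om f :=
  Finset.sum_nonneg fun _ _ => Real.iSup_nonneg fun _ => by split_ifs <;> simp [dXm_nonneg]

lemma dOmSup_nonneg (f : Grid N M → Pt m n) : 0 ≤ dOmSup Om Nbh f :=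
  Real.iSup_nonneg fun _ => by split_ifs <;> simp [dXm_nonneg]

lemma dXm_le_dOmSup (f : Grid N M → Pt m n) {p q : Grid N M} (hp : p ∈ Omᶜ) (hq : q ∈ Omᶜ)
    (hpq : q ∈ Nbh p) : dXm (f p) (f q) ≤ dOmSup Om Nbh f := by
  have := le_ciSup (Set.finite_range fun pq : Grid N M × Grid N M =>
    if pq.1 ∈ Omᶜ ∧ pq.2 ∈ Omᶜ ∧ pq.2 ∈ Nbh pq.1 then dXm (f pq.1) (f pq.2) else 0).bddAbove
    (p, q)
  rwa [if_pos ⟨hp, hq, hpq⟩] at this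

lemma dOmSup_le_add {x f : Grid N M → Pt m n} {δ : ℝ} (hδ : 0 ≤ δ)
    (hxf : ∀ q ∈ Omᶜ, dXm (x q) (f q) ≤ δ) :
    dOmSup Om Nbh x ≤ dOmSup Om Nbh f + 2 * δ := by
  refine Real.iSup_le (fun ⟨p, q⟩ => ?_) (by linarith [dOmSup_nonneg Om Nbh f])
  split_ifs with h
  · obtain ⟨hp, hq, hpq⟩ := h
    calc dXm (x p) (x q) ≤ dXm (x p) (f p) + (dXm (f p) (f q) + dXm (f q) (x q)) :=
          (dXm_triangle _ _ _).trans (add_le_add_right (dXm_triangle _ _ _) _)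
      _ ≤ δ + (dOmSup Om Nbh f + δ) := by
          gcongr
          · exact hxf p hp
          · exact dXm_le_dOmSup Om Nbh f hp hq hpq
          · exact dXm_comm (f q) (x q) ▸ hxf q hq
      _ = dOmSup Om Nbh f + 2 * δ := by ring
  · linarith [dOmSup_nonneg Om Nbh f]

end Suprema

lemma le_div_of_sq_le_mul {d K t c e : ℝ} (hc : 0 < c) (he : 0 ≤ e) (ht : 0 ≤ t)
    (hd : d ^ 2 ≤ K * t) (ht' : t ≤ e ^ 2 / (c ^ 2 * K)) : d ≤ e / c := by
  have hKt : c ^ 2 * K * t ≤ e ^ 2 := by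
    rcases le_or_gt (c ^ 2 * K) 0 with hK | hK
    · nlinarith [mul_nonpos_of_nonpos_of_nonneg hK ht]
    · rwa [le_div_iff₀ hK, mul_comm] at ht'
  have hcd : (c * d) ^ 2 ≤ e ^ 2 := by nlinarith
  rw [le_div_iff₀ hc, mul_comm]
  exact (le_abs_self _).trans (abs_le_of_sq_le_sq hcd he)

theorem inpainting_minimizer_eSup_bound_general
    (m n N M : ℕ)
    (Om : Finset (Grid N M)) (Nbh : Grid N M → Finset (Grid N M))
    (nu : Grid N M → Grid N M)
    (hnu1 : ∀ p, nu p ∈ Omᶜ) (hnu2 : ∀ p ∈ Omᶜ, nu p = p)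
    (a1 a2 a3 a4 b1 b2 g : ℝ)
    (ha1 : 0 ≤ a1) (ha2 : 0 ≤ a2) (ha3 : 0 ≤ a3) (ha4 : 0 ≤ a4)
    (hb1 : 0 ≤ b1) (hb2 : 0 ≤ b2) (hg : 0 ≤ g)
    (f : Grid N M → Pt m n)
    (hf : ∀ p ∈ Omᶜ, ∀ i, (f p).1 i ∈ Set.Ico (-Real.pi) Real.pi)
    (eps : ℝ) (heps : 0 < eps)
    (B' C : ℝ) (hB'1 : 1 ≤ B')
    (hB' : ∀ gd : Grid N M → Pt m n,
      (∀ p ∈ Omᶜ, ∀ i, (gd p).1 i ∈ Set.Ico (-Real.pi) Real.pi) →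
      ∀ u, MinNoiseless N M Om gd a1 a2 a3 a4 b1 b2 g u →
        ∀ p, dXm (u p) (gd (nu p)) ≤ B' * dOmSup Om Nbh gd)
    (hC : ∀ gd : Grid N M → Pt m n,
      (∀ p ∈ Omᶜ, ∀ i, (gd p).1 i ∈ Set.Ico (-Real.pi) Real.pi) →
      d1full (fun p => gd (nu p)) ≤ C * d1Om Om gd)
    (hfar : dOmSup Om Nbh f < eps / (4 * B'))
    (pmax : ℝ)
    (hpmax : pmax = max a1 (max a2 (max a3 (max a4 (max b1 (max b2 g))))))
    (hsmall : d1Om Om f ≤ eps ^ 2 / (8 ^ 2 * 20 * pmax * C * B' ^ 2)) :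
    ∀ xstar : Grid N M → Pt m n,
      (MinNoiseless N M Om f a1 a2 a3 a4 b1 b2 g xstar ∨
        MinNoisy N M Om f a1 a2 a3 a4 b1 b2 g xstar) →
      eSup nu xstar f ≤ eps := by
  intro x hx
  have hB'pos : 0 < B' := by linarith
  have hfar' : B' * dOmSup Om Nbh f < eps / 4 := by
    rw [lt_div_iff₀ (by positivity)] at hfar
    linarith
  rcases hx with hx | hx
  · exact Real.iSup_le (fun p => (hB' f hf x hx p).trans (by linarith)) heps.le
  have hpmax0 : 0 ≤ pmax := hpmax ▸ le_max_of_le_left ha1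
  have hdata : ∀ q ∈ Omᶜ, dXm (x q) (f q) ≤ eps / (8 * B') := fun q hq => by
    refine le_div_of_sq_le_mul (K := 20 * pmax * C) (by positivity) heps.le (d1Om_nonneg Om f) ?_
      (by convert hsmall using 2; ring)
    calc dXm (x q) (f q) ^ 2 ≤ ∑ q ∈ Omᶜ, dXm (x q) (f q) ^ 2 :=
          Finset.single_le_sum (f := fun q => dXm (x q) (f q) ^ 2) (fun _ _ => sq_nonneg _) hq
      _ ≤ 20 * pmax * d1full fun p => f (nu p) :=
          hpmax ▸ hx.sum_sq_dXm_le_d1full hnu1 hnu2 hf ha1 ha2 ha3 ha4 hb1 hb2 hg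
      _ ≤ 20 * pmax * C * d1Om Om f := by nlinarith [hC f hf]
  have hself := hB' x (fun p _ => hx.1 p) x hx.minNoiseless_self
  have hOm := dOmSup_le_add Om Nbh (by positivity) hdata
  have h8 : eps / (8 * B') ≤ eps / 8 :=
    div_le_div_of_nonneg_left heps.le (by norm_num) (by linarith)
  have h4 : B' * (2 * (eps / (8 * B'))) = eps / 4 := by field_simp; ring
  refine Real.iSup_le (fun p => ?_) heps.le
  calc dXm (x p) (f (nu p)) ≤ dXm (x p) (x (nu p)) + dXm (x (nu p)) (f (nu p)) :=
        dXm_triangle _ _ _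
    _ ≤ B' * (dOmSup Om Nbh f + 2 * (eps / (8 * B'))) + eps / (8 * B') :=
        add_le_add ((hself p).trans (by gcongr)) (hdata _ (hnu1 p))
    _ ≤ eps := by rw [mul_add, h4]; linarith

/-- **Lemma 4.4.** If the data `f` on `Ω^C` satisfies `d^Ω_∞(f) < ε/(4B'_ν(Ω))` and the
model parameters satisfy `d₁^Ω(f) ≤ ε²/(8²·20·p·C_ν(Ω)·B'_ν(Ω)²)`, then every minimizer
`x*` of the inpainting functional `J_Ω` (noiseless constrained model or noisy model)
satisfies `e_∞(x*, f) ≤ ε`. -/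
theorem inpainting_minimizer_eSup_bound
    (m n N M : ℕ)
    (Om : Finset (Grid N M)) (Nbh : Grid N M → Finset (Grid N M))
    (hcover : ∀ p : Grid N M, ∃ q ∈ Omᶜ, p ∈ Nbh q)
    (nu : Grid N M → Grid N M)
    (hnu1 : ∀ p, nu p ∈ Omᶜ) (hnu2 : ∀ p ∈ Omᶜ, nu p = p)
    (a1 a2 a3 a4 b1 b2 g : ℝ)
    (ha1 : 0 ≤ a1) (ha2 : 0 ≤ a2) (ha3 : 0 ≤ a3) (ha4 : 0 ≤ a4)
    (hb1 : 0 ≤ b1) (hb2 : 0 ≤ b2) (hg : 0 ≤ g)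
    (f : Grid N M → Pt m n)
    (hf : ∀ p ∈ Omᶜ, ∀ i, (f p).1 i ∈ Set.Ico (-Real.pi) Real.pi)
    (eps : ℝ) (heps : 0 < eps)
    (B' C : ℝ) (hB'1 : 1 ≤ B')
    (hB' : ∀ gd : Grid N M → Pt m n,
      (∀ p ∈ Omᶜ, ∀ i, (gd p).1 i ∈ Set.Ico (-Real.pi) Real.pi) →
      ∀ u, MinNoiseless N M Om gd a1 a2 a3 a4 b1 b2 g u →
        ∀ p, dXm (u p) (gd (nu p)) ≤ B' * dOmSup Om Nbh gd)
    (hC : ∀ gd : Grid N M → Pt m n,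
      (∀ p ∈ Omᶜ, ∀ i, (gd p).1 i ∈ Set.Ico (-Real.pi) Real.pi) →
      d1full (fun p => gd (nu p)) ≤ C * d1Om Om gd)
    (hfar : dOmSup Om Nbh f < eps / (4 * B'))
    (pmax : ℝ)
    (hpmax : pmax = max a1 (max a2 (max a3 (max a4 (max b1 (max b2 g))))))
    (hsmall : d1Om Om f ≤ eps ^ 2 / (8 ^ 2 * 20 * pmax * C * B' ^ 2)) :
    ∀ xstar : Grid N M → Pt m n,
      (MinNoiseless N M Om f a1 a2 a3 a4 b1 b2 g xstar ∨
        MinNoisy N M Om f a1 a2 a3 a4 b1 b2 g xstar) →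
      eSup nu xstar f ≤ eps :=
  inpainting_minimizer_eSup_bound_general m n N M Om Nbh nu hnu1 hnu2 a1 a2 a3 a4 b1 b2 g ha1 ha2
    ha3 ha4 hb1 hb2 hg f hf eps heps B' C hB'1 hB' hC hfar pmax hpmax hsmall
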